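/- arXiv:2311.16844 — 7 statements merged into one kernel-verified Lean document; each statement's English description precedes it below -/
import Mathlib

section
/- Let t, t' : X → Option (Y × Option (PMF Y) × Bool) be labeled memories, δ : PMF Y, and x : X. Assume the invariant I(t, t', δ) holds, t x = none, and t' x = some (v, d, ε). Then d = some δ, and after the left program stores the borrowed value v at x and both programs declassify their entry at x, the invariant is preserved: I(Function.update t x (some (v, some δ, false)), Function.update t' x (some (v, some δ, false)), δ). (This is the invariant-preservation part Φ₃ of the paper's Theorem 'Direct lazy sampling'.) -/
/-- A labeled memory maps locations to optional labeled values: a value,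
an optional distribution label, and a confidentiality label
(`true` = SECRET, `false` = LEAKED). -/
abbrev LMem (X Y : Type*) := X → Option (Y × Option (PMF Y) × Bool)

/-- The invariant `I(t, t', δ)` for secure random assignment between two
labeled memories: (i) entries of `t'` carry distribution label `δ`;
(ii) entries of `t` are also set in `t'` with the same value;
(iii) LEAKED entries of `t` coincide with the corresponding entries of `t'`;
(iv) entries set in `t'` but not in `t` are SECRET. -/
def SecInv {X Y : Type*} (t t' : LMem X Y) (δ : PMF Y) : Prop :=
  ∀ x : X,
    (∀ v' d' ε', t' x = some (v', d', ε') → d' = some δ) ∧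
    (∀ v d ε, t x = some (v, d, ε) →
      ∃ v' d' ε', t' x = some (v', d', ε') ∧ v' = v) ∧
    (∀ l, t x = some l → l.2.2 = false → t' x = some l) ∧
    (t x = none → ∀ l', t' x = some l' → l'.2.2 = true)

/-- Invariant-preservation part Φ₃ of the Theorem "Direct lazy sampling":
under the invariant, if `x` is unset in `t` and set in `t'` with entry
`(v, d, ε)`, then `d = some δ`, and after the left program stores the borrowed
value `v` at `x` and both programs declassify their entry at `x`, the
invariant is preserved. -/
theorem direct_lazy_sampling_invariant {X Y : Type*} [DecidableEq X]
    (t t' : LMem X Y) (δ : PMF Y) (x : X)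
    (v : Y) (d : Option (PMF Y)) (ε : Bool)
    (hI : SecInv t t' δ) (h₁ : t x = none) (h₂ : t' x = some (v, d, ε)) :
    d = some δ ∧
    SecInv (Function.update t x (some (v, some δ, false)))
      (Function.update t' x (some (v, some δ, false))) δ := by
  refine ⟨(hI x).1 v d ε h₂, fun y => ?_⟩
  by_cases hxy : y = x
  · subst hxy
    simp [Function.update_self]
  · simp only [Function.update_of_ne hxy]
    exact hI y
end

section
/- Let X and Y be types with Y inhabited (with default element y₀ : Y), let x : X and δ : PMF Y, and write M for the type of labeled memories X → Option (Y × Option (PMF Y) × Bool). Define the left program L : M → PMF (M × Y) by L m = δ.bind (fun v => PMF.pure (Function.update m x (some (v, some δ, false)), v)) (sample v from δ, store it at x with distribution label δ and, after declassification, confidentiality LEAKED, and output v), and the right program R : M → PMF (M × Y) by R m = PMF.pure (Function.update m x (Option.map (fun l => (l.1, l.2.1, false)) (m x)), (Option.map (fun l => l.1) (m x)).getD y₀) (declassify the entry at x and output its value). Let σ : PMF (M × M) satisfy: every (m₁, m₂) in the support of σ has I(m₁, m₂, δ), m₁ x = none, and m₂ x = none; and let ρ₀ := σ.bind (fun p =>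 δ.map (fun f => (p.1, Function.update p.2 x (some (f, some δ, true))))) (the right memory receives a fresh SECRET δ-sample at x). Then there exists a coupling ρ : PMF ((M × Y) × (M × Y)) with ρ.map Prod.fst = ρ₀.bind (fun p => L p.1), ρ.map Prod.snd = ρ₀.bind (fun p => R p.2), and such that every ((m₁', r₁), (m₂', r₂)) in the support of ρ satisfies r₁ = r₂, m₁' x = some (r₁, some δ, false), and I(m₁', m₂', δ). (This is the paper's Theorem 'Direct lazy sampling', stated denotationally with an explicit probabilistic coupling in place of the pRHL lifting.) -/
/-- Theorem "Direct lazy sampling", stated denotationally with an explicit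
probabilistic coupling in place of the pRHL lifting. -/
theorem direct_lazy_sampling {X Y : Type*} [DecidableEq X] (y₀ : Y)
    (x : X) (δ : PMF Y)
    (L : LMem X Y → PMF (LMem X Y × Y))
    (hL : L = fun m =>
      δ.bind (fun v => PMF.pure (Function.update m x (some (v, some δ, false)), v)))
    (R : LMem X Y → PMF (LMem X Y × Y))
    (hR : R = fun m =>
      PMF.pure (Function.update m x (Option.map (fun l => (l.1, l.2.1, false)) (m x)),
        (Option.map (fun l => l.1) (m x)).getD y₀))
    (σ : PMF (LMem X Y × LMem X Y))
    (hσ : ∀ p ∈ σ.support, SecInv p.1 p.2 δ ∧ p.1 x = none ∧ p.2 x = none)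
    (ρ₀ : PMF (LMem X Y × LMem X Y))
    (hρ₀ : ρ₀ = σ.bind (fun p =>
      δ.map (fun f => (p.1, Function.update p.2 x (some (f, some δ, true)))))) :
    ∃ ρ : PMF ((LMem X Y × Y) × (LMem X Y × Y)),
      ρ.map Prod.fst = ρ₀.bind (fun p => L p.1) ∧
      ρ.map Prod.snd = ρ₀.bind (fun p => R p.2) ∧
      ∀ q ∈ ρ.support,
        q.1.2 = q.2.2 ∧
        q.1.1 x = some (q.1.2, some δ, false) ∧
        SecInv q.1.1 q.2.1 δ := by
    classical
  subst hL hR hρ₀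
  refine ⟨σ.bind (fun p => δ.bind (fun v => PMF.pure
      ((Function.update p.1 x (some (v, some δ, false)), v),
       (Function.update p.2 x (some (v, some δ, false)), v)))), ?_, ?_, ?_⟩
  · simp only [PMF.map_bind, PMF.pure_map, PMF.bind_bind, PMF.bind_map, PMF.pure_bind,
      Function.comp_def, PMF.bind_const, PMF.bind_const]
  · simp only [PMF.map_bind, PMF.pure_map, PMF.bind_bind, PMF.bind_map, PMF.pure_bind,
      Function.comp_def, PMF.bind_const, Function.update_self, Option.map_some, Option.getD_some,
      Function.update_idem]
  · intro q hq
    simp only [PMF.support_bind, PMF.support_pure, Set.mem_iUnion, Set.mem_singleton_iff] at hq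
    obtain ⟨p, hp, v, hv, rfl⟩ := hq
    obtain ⟨hinv, h1, h2⟩ := hσ p hp
    refine ⟨rfl, by simp [Function.update_self], ?_⟩
    intro x'
    obtain ⟨i1, i2, i3, i4⟩ := hinv x'
    by_cases hxx : x' = x
    · subst hxx
      simp only [Function.update_self]
      refine ⟨?_, ?_, ?_, ?_⟩
      · rintro v' d' ε' h; cases h; rfl
      · rintro a b c h; cases h; exact ⟨_, _, _, rfl, rfl⟩
      · rintro l h _; cases h; rfl
      · intro h; cases h
    · simp only [Function.update_of_ne hxx]
      exact ⟨i1, i2, i3, i4⟩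
end

section
/- Let X and Y be types with Y inhabited (with default element y₀ : Y), let x : X and δ : PMF Y, and write M for the type of labeled memories X → Option (Y × Option (PMF Y) × Bool). Define L : M → PMF (M × Y) by L m = δ.bind (fun v => PMF.pure (Function.update m x (some (v, some δ, false)), v)), and R : M → PMF (M × Y) by R m = PMF.pure (Function.update m x (Option.map (fun l => (l.1, l.2.1, false)) (m x)), (Option.map (fun l => l.1) (m x)).getD y₀). Let σ : PMF (M × M) satisfy: every (m₁, m₂) in the support of σ has I(m₁, m₂, δ), m₁ x = none, and m₂ x = none; and let ρ₀ := σ.bind (fun p => δ.map (fun f => (p.1, Function.update p.2 x (some (f, some δ, true))))). Then the joint distribution of (entry stored at x, output) is the same for both programs and equals a fresh declassified δ-sample: (ρ₀.bind (fun p => L p.1)).map (fun q => (q.1 x, q.2)) = (ρ₀.bind (fun p => R p.2)).map (fun q => (q.1 x, q.2)) = δ.map (fun v => ((some (v, some δ, false) : Option (Y × Option (PMF Y) × Bool)), v)). (This is the combination of the output-equality part Φ₁ and the distribution-label part Φ₂ of the paper's Theorem 'Direct lazy sampling'.) -/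
/-- Output-equality part Φ₁ and distribution-label part Φ₂ of the Theorem
"Direct lazy sampling": the joint distribution of (entry stored at `x`,
output) is the same for both programs and equals a fresh declassified
`δ`-sample. -/
theorem direct_lazy_sampling_output {X Y : Type*} [DecidableEq X] (y₀ : Y)
    (x : X) (δ : PMF Y)
    (L : LMem X Y → PMF (LMem X Y × Y))
    (hL : L = fun m =>
      δ.bind (fun v => PMF.pure (Function.update m x (some (v, some δ, false)), v)))
    (R : LMem X Y → PMF (LMem X Y × Y))
    (hR : R = fun m =>
      PMF.pure (Function.update m x (Option.map (fun l => (l.1, l.2.1, false)) (m x)),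
        (Option.map (fun l => l.1) (m x)).getD y₀))
    (σ : PMF (LMem X Y × LMem X Y))
    (hσ : ∀ p ∈ σ.support, SecInv p.1 p.2 δ ∧ p.1 x = none ∧ p.2 x = none)
    (ρ₀ : PMF (LMem X Y × LMem X Y))
    (hρ₀ : ρ₀ = σ.bind (fun p =>
      δ.map (fun f => (p.1, Function.update p.2 x (some (f, some δ, true)))))) :
    (ρ₀.bind (fun p => L p.1)).map (fun q => (q.1 x, q.2)) =
      (ρ₀.bind (fun p => R p.2)).map (fun q => (q.1 x, q.2)) ∧
    (ρ₀.bind (fun p => R p.2)).map (fun q => (q.1 x, q.2)) =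
      δ.map (fun v =>
        ((some (v, some δ, false) : Option (Y × Option (PMF Y) × Bool)), v)) := by
  subst hL hR hρ₀
  have key : ∀ (g : LMem X Y × LMem X Y → PMF (LMem X Y × Y)),
      ((σ.bind (fun p => δ.map (fun f =>
        (p.1, Function.update p.2 x (some (f, some δ, true)))))).bind g).map
          (fun q => (q.1 x, q.2)) =
      σ.bind (fun p => (δ.bind (fun f =>
        g (p.1, Function.update p.2 x (some (f, some δ, true))))).map
          (fun q => (q.1 x, q.2))) := by
    intro g
    simp only [PMF.map, PMF.bind_bind, Function.comp_apply, PMF.pure_bind]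
  have h2 : ((σ.bind (fun p => δ.map (fun f =>
        (p.1, Function.update p.2 x (some (f, some δ, true)))))).bind
          (fun p => PMF.pure (Function.update p.2 x
            (Option.map (fun l => (l.1, l.2.1, false)) (p.2 x)),
            (Option.map (fun l => l.1) (p.2 x)).getD y₀))).map
          (fun q => (q.1 x, q.2)) =
      δ.map (fun v =>
        ((some (v, some δ, false) : Option (Y × Option (PMF Y) × Bool)), v)) := by
    rw [key]
    simp only [Function.update_self, Option.map_some, Option.getD_some, PMF.map,
      PMF.bind_bind, Function.comp_apply, PMF.pure_bind, PMF.bind_const]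
    rfl
  have h1 : ((σ.bind (fun p => δ.map (fun f =>
        (p.1, Function.update p.2 x (some (f, some δ, true)))))).bind
          (fun p => δ.bind (fun v => PMF.pure
            (Function.update p.1 x (some (v, some δ, false)), v)))).map
          (fun q => (q.1 x, q.2)) =
      δ.map (fun v =>
        ((some (v, some δ, false) : Option (Y × Option (PMF Y) × Bool)), v)) := by
    rw [key]
    simp only [PMF.bind_const, Function.update_self, PMF.map,
      PMF.bind_bind, Function.comp_apply, PMF.pure_bind]
    rfl
  exact ⟨h1.trans h2.symm, h2⟩
end

section
/- Let t, t' : X → Option (Y × Option (PMF Y) × Bool) be labeled memories, δ : PMF Y, and x : X. If the invariant I(t, t', δ) holds and t' x = none, then t x = none, and for every v : Y the invariant is preserved when the right program stores a fresh SECRET sample at x: I(t, Function.update t' x (some (v, some δ, true)), δ). (This is the semantic content of the proof obligation for procedure g in the paper's indistinguishability proof, in the case where x is not yet in the right map's domain.) -/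
/-- Proof obligation for procedure `g` (case `x` not in the right map's
domain): under the invariant, if `x` is unset in `t'` then it is unset in `t`,
and the invariant is preserved when the right program stores a fresh SECRET
`δ`-sample at `x`. -/
theorem g_obligation_fresh {X Y : Type*} [DecidableEq X]
    (t t' : LMem X Y) (δ : PMF Y) (x : X)
    (hI : SecInv t t' δ) (h : t' x = none) :
    t x = none ∧
    ∀ v : Y, SecInv t (Function.update t' x (some (v, some δ, true))) δ := by
  have htx : t x = none := by
    cases hx : t x with
    | none => rfl
    | some l =>
      obtain ⟨v, d, ε⟩ := l
      obtain ⟨_, h2, _, _⟩ := hI x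
      obtain ⟨v', d', ε', hv', _⟩ := h2 v d ε hx
      rw [h] at hv'; exact absurd hv' (by simp)
  refine ⟨htx, fun v y => ?_⟩
  obtain ⟨h1, h2, h3, h4⟩ := hI y
  by_cases hyx : y = x
  · subst hyx
    refine ⟨?_, ?_, ?_, ?_⟩
    · intro v' d' ε' hv'
      simp [Function.update_self] at hv'
      exact hv'.2.1.symm
    · intro a b c hab
      rw [htx] at hab; exact absurd hab (by simp)
    · intro l hl _
      rw [htx] at hl; exact absurd hl (by simp)
    · intro _ l' hl'
      simp [Function.update_self] at hl'
      simp [← hl']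
  · simp only [Function.update_of_ne hyx]
    exact ⟨h1, h2, h3, h4⟩
end

section
/- Let X and Y be types, x : X, δ : PMF Y, and write M for the type of labeled memories X → Option (Y × Option (PMF Y) × Bool). Define G₁ : M → PMF M by G₁ m = PMF.pure m (the no-op implementation of procedure g in construction P₁), and G₂ : M → PMF M by G₂ m = if m x = none then δ.map (fun v => Function.update m x (some (v, some δ, true))) else PMF.pure m (the eager-filling implementation of g in construction P₂). Then for all labeled memories m₁, m₂ with I(m₁, m₂, δ), there exists a coupling ρ : PMF (M × M) with ρ.map Prod.fst = G₁ m₁, ρ.map Prod.snd = G₂ m₂, and I(n₁, n₂, δ) for every (n₁, n₂) in the support of ρ. (This is the pRHL judgment for procedure g in the paper's indistinguishability proof, stated via an explicit probabilistic coupling.) -/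
attribute [local instance] Option.decidableEqNone

/-- pRHL judgment for procedure `g` of the two lazy constructions `P₁`
(no-op `g`) and `P₂` (eager-filling `g`), stated via an explicit
probabilistic coupling preserving the invariant. -/
theorem g_coupling {X Y : Type*} [DecidableEq X] (x : X) (δ : PMF Y)
    (G₁ G₂ : LMem X Y → PMF (LMem X Y))
    (hG₁ : G₁ = fun m => PMF.pure m)
    (hG₂ : G₂ = fun m =>
      if m x = none then δ.map (fun v => Function.update m x (some (v, some δ, true)))
      else PMF.pure m)
    (m₁ m₂ : LMem X Y) (hI : SecInv m₁ m₂ δ) :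
    ∃ ρ : PMF (LMem X Y × LMem X Y),
      ρ.map Prod.fst = G₁ m₁ ∧
      ρ.map Prod.snd = G₂ m₂ ∧
      ∀ q ∈ ρ.support, SecInv q.1 q.2 δ := by
  refine ⟨(G₂ m₂).map (fun n => (m₁, n)), ?_, ?_, ?_⟩
  · rw [PMF.map_comp]
    simp [hG₁, PMF.map_const, Function.comp]
  · rw [PMF.map_comp]
    have : (Prod.snd ∘ fun n : LMem X Y => (m₁, n)) = id := rfl
    rw [this, PMF.map_id]
  · rintro ⟨n₁, n₂⟩ hq
    simp only [PMF.support_map, Set.mem_image] at hq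
    obtain ⟨n, hn, hpair⟩ := hq
    injection hpair with h1 h2
    subst h1; subst h2
    rw [hG₂] at hn; dsimp only at hn
    by_cases hx : m₂ x = none
    · rw [if_pos hx] at hn
      simp only [PMF.support_map, Set.mem_image] at hn
      obtain ⟨v, hv, rfl⟩ := hn
      intro y
      by_cases hy : y = x
      · subst hy
        have hm₁ : m₁ y = none := by
          rcases h : m₁ y with _ | ⟨v₀, d₀, ε₀⟩
          · rfl
          · obtain ⟨v', d', ε', hv', _⟩ := (hI y).2.1 v₀ d₀ ε₀ h
            rw [hx] at hv'; exact absurd hv' (by simp)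
        refine ⟨?_, ?_, ?_, ?_⟩ <;> dsimp only [Function.update_self]
        · intro v' d' ε' h
          rw [Function.update_self] at h
          injection h with h
          exact (congrArg (fun p => p.2.1) h).symm
        · intro v₀ d₀ ε₀ h; rw [hm₁] at h; exact absurd h (by simp)
        · intro l h _; rw [hm₁] at h; exact absurd h (by simp)
        · intro _ l' h
          rw [Function.update_self] at h
          injection h with h
          exact (congrArg (fun p => p.2.2) h).symm
      · have := hI y
        simpa [Function.update_of_ne hy] using this
    · rw [if_neg hx] at hn
      simp only [PMF.support_pure, Set.mem_singleton_iff] at hn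
      subst hn
      exact hI
end

section
/- Let t, t' : X → Option (Y × Option (PMF Y) × Bool) be labeled memories, δ : PMF Y, and x : X. If the invariant I(t, t', δ) holds and t x = some (v, some δ, ε) (the left entry at x exists and carries distribution label δ), then t' x = some (v, some δ, ε') for some confidentiality label ε' (same value and same distribution label), so both procedures return the same value v; moreover, after both programs declassify their entry at x the invariant still holds: I(Function.update t x (some (v, some δ, false)), Function.update t' x (some (v, some δ, false)), δ). (This is the semantic content of the proof obligation for procedure f in the paper's indistinguishability proof, in the case where x is already in the left map's domain.) -/
/-- Proof obligation for procedure `f` (case `x` already in the left map's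
domain): under the invariant, if `t x = some (v, some δ, ε)`, then `t'` holds
the same value with the same distribution label at `x` (so both procedures
return `v`), and the invariant is preserved after both programs declassify
their entry at `x`. -/
theorem f_obligation_existing {X Y : Type*} [DecidableEq X]
    (t t' : LMem X Y) (δ : PMF Y) (x : X) (v : Y) (ε : Bool)
    (hI : SecInv t t' δ) (h : t x = some (v, some δ, ε)) :
    (∃ ε' : Bool, t' x = some (v, some δ, ε')) ∧
    SecInv (Function.update t x (some (v, some δ, false)))
      (Function.update t' x (some (v, some δ, false))) δ := by
  obtain ⟨h1, h2, h3, h4⟩ := hI x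
  obtain ⟨v', d', ε', ht', hv⟩ := h2 v (some δ) ε h
  have hd : d' = some δ := h1 v' d' ε' ht'
  subst hv; subst hd
  refine ⟨⟨ε', ht'⟩, ?_⟩
  intro y
  by_cases hy : y = x
  · subst hy
    simp [Function.update_self]
  · simp only [Function.update_of_ne hy]
    exact hI y
end

section
/- Fix types X and Y and δ : PMF Y, and let oracle states be memories m : X → Option Y, initially the empty map fun _ => none. The shared procedure f is F : (X → Option Y) → X → PMF ((X → Option Y) × Y) with F m x = match m x with | some y => PMF.pure (m, y) | none => δ.bind (fun y => PMF.pure (Function.update m x (some y), y)) (lazily sample, memoize, and return). Construction P₁ implements procedure g as the no-op G₁ m x = PMF.pure m, while construction P₂ implements g as G₂ m x = if m x = none then δ.map (fun y => Function.update m x (some y)) else PMF.pure m. An adaptive distinguisher strategy is any function A : List (Option Y) → X × Bool mapping the transcript of answers so far (some y recording an f-answer, none recording a g-call) to the next query (x, b), where b = true means query f at x and b = false means query g at x. For i ∈ {1, 2}, define run_i : ℕ → (X → Option Y) → List (Option Y) → PMF (List (Option Y)) by run_i 0 m τ = PMF.pure τ, and run_i (n+1) m τ = (let (x, b) := A τ;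 if b then (F m x).bind (fun p => run_i n p.1 (τ ++ [some p.2])) else (G_i m x).bind (fun m' => run_i n m' (τ ++ [none]))). Theorem: for every n : ℕ and every strategy A, run₁ n (fun _ => none) [] = run₂ n (fun _ => none) []. Consequently, for any decision function D : List (Option Y) → Bool, the probabilities that the distinguisher outputs true against P₁ and against P₂ are equal: the constructions P₁ and P₂ are perfectly indistinguishable, i.e., every adversary interacting with the oracle for any finite number of adaptively chosen queries has distinguishing advantage zero. (This is the denotational content of the paper's Theorem on the indistinguishability of the two lazy constructions P₁ and P₂.) -/
attribute [local instance] Option.decidableEqNone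

/-- The shared procedure `f`: lazily sample from `δ`, memoize, and return. -/
noncomputable def procF {X Y : Type} [DecidableEq X] (δ : PMF Y)
    (m : X → Option Y) (x : X) : PMF ((X → Option Y) × Y) :=
  match m x with
  | some y => PMF.pure (m, y)
  | none => δ.bind (fun y => PMF.pure (Function.update m x (some y), y))

/-- Procedure `g` of construction `P₁`: a no-op. -/
noncomputable def procG₁ {X Y : Type}
    (m : X → Option Y) (_x : X) : PMF (X → Option Y) :=
  PMF.pure m

/-- Procedure `g` of construction `P₂`: eagerly fill the map at `x`. -/
noncomputable def procG₂ {X Y : Type} [DecidableEq X] (δ : PMF Y)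
    (m : X → Option Y) (x : X) : PMF (X → Option Y) :=
  if m x = none then δ.map (fun y => Function.update m x (some y))
  else PMF.pure m

/-- Running an adaptive distinguisher strategy `A` for a given number of
queries against the oracle `(procF δ, G)`, producing the distribution of
transcripts: `some y` records an `f`-answer, `none` records a `g`-call. -/
noncomputable def run {X Y : Type} [DecidableEq X] (δ : PMF Y)
    (G : (X → Option Y) → X → PMF (X → Option Y))
    (A : List (Option Y) → X × Bool) :
    ℕ → (X → Option Y) → List (Option Y) → PMF (List (Option Y))
  | 0, _, τ => PMF.pure τ
  | n + 1, m, τ =>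
      if (A τ).2 then
        (procF δ m (A τ).1).bind (fun p => run δ G A n p.1 (τ ++ [some p.2]))
      else
        (G m (A τ).1).bind (fun m' => run δ G A n m' (τ ++ [none]))

private lemma lazy_fill {X Y : Type} [DecidableEq X] (δ : PMF Y)
    (A : List (Option Y) → X × Bool) :
    ∀ (n : ℕ) (m : X → Option Y) (x : X), m x = none → ∀ τ,
      δ.bind (fun y =>
          run δ (fun m x => procG₁ m x) A n (Function.update m x (some y)) τ)
        = run δ (fun m x => procG₁ m x) A n m τ := by
  intro n
  induction n with
  | zero => intro m x hx τ; simp [run, PMF.bind_const]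
  | succ n ih =>
    intro m x hx τ
    by_cases hb : (A τ).2
    · by_cases hq : (A τ).1 = x
      · -- f-query at x itself
        subst hq
        simp only [run, hb, if_true, procF, hx, Function.update_self,
          PMF.bind_bind, PMF.pure_bind]
      · have hupd : ∀ y : Y, Function.update m x (some y) (A τ).1 = m (A τ).1 :=
          fun y => Function.update_of_ne hq _ _
        cases hm : m (A τ).1 with
        | some y0 =>
          simp only [run, hb, if_true, procF, hm, hupd, PMF.pure_bind]
          exact ih m x hx _
        | none =>
          simp only [run, hb, if_true, procF, hm, hupd, PMF.bind_bind,
            PMF.pure_bind]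
          rw [PMF.bind_comm]
          refine congrArg δ.bind (funext fun y' => ?_)
          have hx' : Function.update m (A τ).1 (some y') x = none := by
            rw [Function.update_of_ne (fun h => hq h.symm)]; exact hx
          have := ih (Function.update m (A τ).1 (some y')) x hx'
            (τ ++ [some y'])
          rw [← this]
          refine congrArg δ.bind (funext fun y => ?_)
          rw [Function.update_comm hq]
    · simp only [run, hb, Bool.false_eq_true, if_false, procG₁, PMF.pure_bind]
      exact ih m x hx _

private lemma run_eq {X Y : Type} [DecidableEq X] (δ : PMF Y)
    (A : List (Option Y) → X × Bool) :
    ∀ (n : ℕ) (m : X → Option Y) (τ : List (Option Y)),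
      run δ (fun m x => procG₁ m x) A n m τ = run δ (procG₂ δ) A n m τ := by
  intro n
  induction n with
  | zero => intro m τ; rfl
  | succ n ih =>
    intro m τ
    by_cases hb : (A τ).2
    · simp only [run, hb, if_true]
      exact congrArg _ (funext fun p => ih _ _)
    · simp only [run, hb, Bool.false_eq_true, if_false, procG₁, procG₂,
        PMF.pure_bind]
      cases hm : m (A τ).1 with
      | some y0 =>
        simp only [hm, reduceCtorEq, if_neg, if_false, PMF.pure_bind]
        exact ih _ _
      | none =>
        simp only [hm, if_true, PMF.map, PMF.bind_bind, PMF.pure_bind,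
          Function.comp_apply]
        exact (lazy_fill δ A n m (A τ).1 hm (τ ++ [none])).symm.trans
          (congrArg δ.bind (funext fun y => ih _ _))

/-- Perfect indistinguishability of the two lazy constructions `P₁` and `P₂`:
for every number of queries `n` and every adaptive strategy `A`, the
transcript distributions coincide; consequently, every decision function `D`
outputs `true` with the same probability against either construction, i.e.,
the distinguishing advantage is zero. -/
theorem lazy_constructions_indistinguishable {X Y : Type} [DecidableEq X]
    (δ : PMF Y) :
    ∀ (n : ℕ) (A : List (Option Y) → X × Bool),
      run δ (fun m x => procG₁ m x) A n (fun _ => none) [] =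
        run δ (procG₂ δ) A n (fun _ => none) [] ∧
      ∀ D : List (Option Y) → Bool,
        ((run δ (fun m x => procG₁ m x) A n (fun _ => none) []).map D) true =
          ((run δ (procG₂ δ) A n (fun _ => none) []).map D) true := by
  intro n A
  refine ⟨run_eq δ A n _ _, fun D => by rw [run_eq δ A n]⟩
end
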